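/- For every integer n ≥ 0, define G(n) = [n² + 3n + 1 + (2/(3(n²+3n+1)))·( n⁴(n+2)²/(2n+1)² + (n+1)²(n+3)⁴/(2n+5)² )] / ((n + 1/2 + 1/(4n+2))·(n + 5/2 + 1/(4n+10))). Then G(n) > 1 for all n ≥ 0, G(n) attains its maximum at n = 2, G is strictly decreasing for n ≥ 2, and G(n) → 4/3 as n → ∞. -/
import Mathlib


open Filter

/-- The contact-limit pair correlation `g_{n,n+2}(z,z)`. -/
noncomputable def Gcorr (n : ℕ) : ℝ :=
  ((n : ℝ) ^ 2 + 3 * n + 1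
      + (2 / (3 * ((n : ℝ) ^ 2 + 3 * n + 1)))
        * ((n : ℝ) ^ 4 * ((n : ℝ) + 2) ^ 2 / (2 * (n : ℝ) + 1) ^ 2
           + ((n : ℝ) + 1) ^ 2 * ((n : ℝ) + 3) ^ 4 / (2 * (n : ℝ) + 5) ^ 2)) /
    (((n : ℝ) + 1/2 + 1/(4*(n : ℝ)+2)) * ((n : ℝ) + 5/2 + 1/(4*(n : ℝ)+10)))

private noncomputable def Ncorr (x : ℝ) : ℝ :=
  256*x^10 + 3840*x^9 + 24720*x^8 + 89280*x^7 + 198936*x^6 + 284472*x^5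
    + 264761*x^4 + 159726*x^3 + 60159*x^2 + 12834*x + 1185

private noncomputable def Dcorr (x : ℝ) : ℝ :=
  192*x^10 + 2880*x^9 + 18528*x^8 + 66816*x^7 + 148572*x^6 + 212220*x^5
    + 198252*x^4 + 121284*x^3 + 46851*x^2 + 10305*x + 975

private lemma Dcorr_pos (n : ℕ) : 0 < Dcorr (n : ℝ) := by
  unfold Dcorr; positivity

private lemma Gcorr_eq (n : ℕ) : Gcorr n = Ncorr (n : ℝ) / Dcorr (n : ℝ) := by
  have hx : (0:ℝ) ≤ (n : ℝ) := Nat.cast_nonneg n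
  have h1 : ((n:ℝ)^2 + 3*n + 1) ≠ 0 := by positivity
  have h2 : (2*(n:ℝ) + 1) ≠ 0 := by positivity
  have h3 : (2*(n:ℝ) + 5) ≠ 0 := by positivity
  have h4 : (4*(n:ℝ) + 2) ≠ 0 := by positivity
  have h5 : (4*(n:ℝ) + 10) ≠ 0 := by positivity
  have h6 : ((n:ℝ) + 1/2 + 1/(4*(n:ℝ)+2)) ≠ 0 := by
    have : (0:ℝ) < (n:ℝ) + 1/2 + 1/(4*(n:ℝ)+2) := by positivity
    linarith
  have h7 : ((n:ℝ) + 5/2 + 1/(4*(n:ℝ)+10)) ≠ 0 := by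
    have : (0:ℝ) < (n:ℝ) + 5/2 + 1/(4*(n:ℝ)+10) := by positivity
    linarith
  have hD : Dcorr (n:ℝ) ≠ 0 := ne_of_gt (Dcorr_pos n)
  unfold Gcorr Ncorr Dcorr
  unfold Dcorr at hD
  field_simp
  ring

private lemma Gcorr_gt_one (n : ℕ) : 1 < Gcorr n := by
  rw [Gcorr_eq, lt_div_iff₀ (Dcorr_pos n), one_mul]
  have h : (0:ℝ) < 64*(n:ℝ)^10 + 960*(n:ℝ)^9 + 6192*(n:ℝ)^8 + 22464*(n:ℝ)^7
      + 50364*(n:ℝ)^6 + 72252*(n:ℝ)^5 + 66509*(n:ℝ)^4 + 38442*(n:ℝ)^3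
      + 13308*(n:ℝ)^2 + 2529*(n:ℝ) + 210 := by positivity
  unfold Ncorr Dcorr
  linarith

private lemma Gcorr_step (k : ℕ) : Gcorr (k + 3) < Gcorr (k + 2) := by
  rw [Gcorr_eq, Gcorr_eq, div_lt_div_iff₀ (Dcorr_pos _) (Dcorr_pos _)]
  have hpos : (0:ℝ) < 6144*(k:ℝ)^17 + 417792*(k:ℝ)^16 + 13228032*(k:ℝ)^15
      + 258908160*(k:ℝ)^14 + 3506919168*(k:ℝ)^13 + 34863688704*(k:ℝ)^12
      + 263201580672*(k:ℝ)^11 + 1539645414912*(k:ℝ)^10 + 7055323968792*(k:ℝ)^9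
      + 25423984408416*(k:ℝ)^8 + 71860816386960*(k:ℝ)^7 + 157839816463296*(k:ℝ)^6
      + 264690431563866*(k:ℝ)^5 + 328994680180488*(k:ℝ)^4 + 288511387022586*(k:ℝ)^3
      + 163592579234232*(k:ℝ)^2 + 50130807692130*(k:ℝ) + 4915211301000 := by positivity
  have key : Ncorr ((k:ℕ) + 2 : ℕ) * Dcorr ((k:ℕ) + 3 : ℕ)
      - Ncorr ((k:ℕ) + 3 : ℕ) * Dcorr ((k:ℕ) + 2 : ℕ)
      = 6144*(k:ℝ)^17 + 417792*(k:ℝ)^16 + 13228032*(k:ℝ)^15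
      + 258908160*(k:ℝ)^14 + 3506919168*(k:ℝ)^13 + 34863688704*(k:ℝ)^12
      + 263201580672*(k:ℝ)^11 + 1539645414912*(k:ℝ)^10 + 7055323968792*(k:ℝ)^9
      + 25423984408416*(k:ℝ)^8 + 71860816386960*(k:ℝ)^7 + 157839816463296*(k:ℝ)^6
      + 264690431563866*(k:ℝ)^5 + 328994680180488*(k:ℝ)^4 + 288511387022586*(k:ℝ)^3
      + 163592579234232*(k:ℝ)^2 + 50130807692130*(k:ℝ) + 4915211301000 := by
    unfold Ncorr Dcorr
    push_cast
    ring
  linarith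

private lemma Gcorr_anti : ∀ m n : ℕ, 2 ≤ m → m < n → Gcorr n < Gcorr m := by
  intro m n hm hmn
  induction n with
  | zero => omega
  | succ k ih =>
    rcases Nat.lt_succ_iff_lt_or_eq.mp hmn with h | h
    · refine lt_trans ?_ (ih h)
      obtain ⟨j, rfl⟩ : ∃ j, k = j + 2 := ⟨k - 2, by omega⟩
      exact Gcorr_step j
    · subst h
      obtain ⟨j, rfl⟩ : ∃ j, m = j + 2 := ⟨m - 2, by omega⟩
      exact Gcorr_step j

/-- `G(n) > 1` for all `n ≥ 0`, `G` attains its maximum at `n = 2`, `G` is strictly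
decreasing for `n ≥ 2`, and `G(n) → 4/3` as `n → ∞`. -/
theorem g_n_nplus2_contact_limit :
    (∀ n : ℕ, 1 < Gcorr n) ∧
    (∀ n : ℕ, Gcorr n ≤ Gcorr 2) ∧
    (∀ m n : ℕ, 2 ≤ m → m < n → Gcorr n < Gcorr m) ∧
    Tendsto Gcorr atTop (nhds (4 / 3)) := by
  refine ⟨Gcorr_gt_one, ?_, Gcorr_anti, ?_⟩
  · intro n
    match n with
    | 0 =>
      rw [Gcorr_eq, Gcorr_eq]
      unfold Ncorr Dcorr
      norm_num
    | 1 =>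
      rw [Gcorr_eq, Gcorr_eq]
      unfold Ncorr Dcorr
      norm_num
    | 2 => exact le_rfl
    | (k+3) => exact le_of_lt (Gcorr_anti 2 (k+3) le_rfl (by omega))
  · -- limit
    have hu : Tendsto (fun n : ℕ => ((n : ℝ))⁻¹) atTop (nhds 0) :=
      tendsto_inv_atTop_zero.comp tendsto_natCast_atTop_atTop
    set f : ℝ → ℝ := fun u =>
      (1185*u^10 + 12834*u^9 + 60159*u^8 + 159726*u^7 + 264761*u^6 + 284472*u^5
        + 198936*u^4 + 89280*u^3 + 24720*u^2 + 3840*u + 256)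
      / (975*u^10 + 10305*u^9 + 46851*u^8 + 121284*u^7 + 198252*u^6 + 212220*u^5
        + 148572*u^4 + 66816*u^3 + 18528*u^2 + 2880*u + 192) with hf_def
    have hf : ContinuousAt f 0 := by
      apply ContinuousAt.div
      · fun_prop
      · fun_prop
      · norm_num
    have hf0 : f 0 = 4 / 3 := by simp [hf_def]; norm_num
    have hcomp : Tendsto (fun n : ℕ => f ((n : ℝ)⁻¹)) atTop (nhds (4/3)) := by
      rw [← hf0]
      exact hf.tendsto.comp hu
    refine hcomp.congr' ?_
    filter_upwards [eventually_ge_atTop 1] with n hn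
    have hx : (0:ℝ) < (n : ℝ) := by exact_mod_cast Nat.pos_of_ne_zero (by omega)
    have hx' : ((n:ℝ)) ≠ 0 := ne_of_gt hx
    rw [Gcorr_eq]
    have hD : Dcorr (n:ℝ) ≠ 0 := ne_of_gt (Dcorr_pos n)
    have hden : (975*((n:ℝ)⁻¹)^10 + 10305*((n:ℝ)⁻¹)^9 + 46851*((n:ℝ)⁻¹)^8
        + 121284*((n:ℝ)⁻¹)^7 + 198252*((n:ℝ)⁻¹)^6 + 212220*((n:ℝ)⁻¹)^5
        + 148572*((n:ℝ)⁻¹)^4 + 66816*((n:ℝ)⁻¹)^3 + 18528*((n:ℝ)⁻¹)^2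
        + 2880*((n:ℝ)⁻¹) + 192) ≠ 0 := by positivity
    simp only [hf_def]
    rw [div_eq_div_iff hden]
    · unfold Ncorr Dcorr
      field_simp
      ring
    · exact hD
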